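/- arXiv:2203.00380 — 3 statements merged into one kernel-verified Lean document; each statement's English description precedes it below -/
import Mathlib

section
/- Let p > 1 and α < p - 1. Then for every measurable nonnegative function f on (0,∞), one has ∫₀^∞ ( (1/y) ∫₀^y f(t) dt )^p y^α dy ≤ ( p/(p−α−1) )^p ∫₀^∞ f(y)^p y^α dy. -/
/-!
Choose `δ = (p - α - 1) / p > 0`. Hölder's inequality with the weight `t ^ (α + δ)` on `(0, y)`,
whose dual weight is `t ^ (δ - 1)`, gives
`(∫₀^y f) ^ p ≤ (y ^ δ / δ) ^ (p - 1) ∫₀^y f ^ p t ^ (α + δ)`, so the left-hand side is at most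
`δ ^ (1 - p) ∫₀^∞ y ^ (-1 - δ) ∫₀^y f ^ p t ^ (α + δ)`. Exchanging the integrals, the inner
integral `∫_t^∞ y ^ (-1 - δ) = t ^ (-δ) / δ` turns this into `δ ^ (-p) ∫₀^∞ f ^ p t ^ α`.
Both integrability conditions (at `0` for the dual weight, at `∞` for the kernel) are `δ > 0`,
i.e. `α < p - 1`.
-/

open MeasureTheory Set
open scoped ENNReal

theorem lintegral_rpow_le_mul_lintegral_weight {X : Type*} [MeasurableSpace X] (μ : Measure X)
    {p : ℝ} (hp : 1 < p) {f w : X → ℝ≥0∞} (hf : AEMeasurable f μ) (hw : AEMeasurable w μ)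
    (hw_pos : ∀ᵐ x ∂μ, w x ≠ 0) (hw_fin : ∀ᵐ x ∂μ, w x ≠ ∞) :
    (∫⁻ x, f x ∂μ) ^ p ≤ (∫⁻ x, w x ^ (-(p - 1)⁻¹) ∂μ) ^ (p - 1) * ∫⁻ x, f x ^ p * w x ∂μ := by
  have hp0 : 0 < p := by linarith
  have hpq : p.HolderConjugate (p / (p - 1)) := Real.HolderConjugate.conjExponent hp
  have hsplit : f =ᵐ[μ] fun x => f x * w x ^ (1 / p) * w x ^ (-(1 / p)) := by
    filter_upwards [hw_pos, hw_fin] with x h0 htop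
    rw [mul_assoc, ← ENNReal.rpow_add _ _ h0 htop, add_neg_cancel, ENNReal.rpow_zero, mul_one]
  have holder := ENNReal.lintegral_mul_le_Lp_mul_Lq μ hpq (f := fun x => f x * w x ^ (1 / p))
    (hf.mul (hw.pow_const (1 / p))) (hw.pow_const (-(1 / p)))
  simp only [Pi.mul_apply] at holder
  rw [← lintegral_congr_ae hsplit] at holder
  have hfw : ∀ x, (f x * w x ^ (1 / p)) ^ p = f x ^ p * w x := fun x => by
    rw [ENNReal.mul_rpow_of_nonneg _ _ hp0.le, ← ENNReal.rpow_mul, one_div_mul_cancel hp0.ne',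
      ENNReal.rpow_one]
  have hw_conj : ∀ x, (w x ^ (-(1 / p))) ^ (p / (p - 1)) = w x ^ (-(p - 1)⁻¹) := fun x => by
    rw [← ENNReal.rpow_mul]; congr 1; field_simp
  simp only [hfw, hw_conj] at holder
  calc (∫⁻ x, f x ∂μ) ^ p
      ≤ ((∫⁻ x, f x ^ p * w x ∂μ) ^ (1 / p) *
          (∫⁻ x, w x ^ (-(p - 1)⁻¹) ∂μ) ^ (1 / (p / (p - 1)))) ^ p :=
        ENNReal.rpow_le_rpow holder hp0.le
    _ = _ := by
      rw [ENNReal.mul_rpow_of_nonneg _ _ hp0.le, ← ENNReal.rpow_mul, ← ENNReal.rpow_mul,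
        one_div_mul_cancel hp0.ne', ENNReal.rpow_one, mul_comm]
      congr 2
      field_simp

theorem lintegral_Ioi_mul_lintegral_Ioo {a : ℝ} {w g : ℝ → ℝ≥0∞} (hw : Measurable w)
    (hg : Measurable g) :
    ∫⁻ y in Ioi a, w y * ∫⁻ t in Ioo a y, g t = ∫⁻ t in Ioi a, (∫⁻ y in Ioi t, w y) * g t := by
  set F : ℝ × ℝ → ℝ≥0∞ := {z | z.2 < z.1}.indicator fun z => w z.1 * g z.2
  have hF : Measurable F :=
    ((hw.comp measurable_fst).mul (hg.comp measurable_snd)).indicator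
      (measurableSet_lt measurable_snd measurable_fst)
  calc ∫⁻ y in Ioi a, w y * ∫⁻ t in Ioo a y, g t
      = ∫⁻ y in Ioi a, ∫⁻ t in Ioi a, F (y, t) := by
        refine setLIntegral_congr_fun measurableSet_Ioi fun y _ => ?_
        have : (fun t => F (y, t)) = (Iio y).indicator fun t => w y * g t := by
          ext t; simp [F, indicator_apply]
        rw [this, lintegral_indicator measurableSet_Iio,
          Measure.restrict_restrict measurableSet_Iio, Iio_inter_Ioi, lintegral_const_mul _ hg]
    _ = ∫⁻ t in Ioi a, ∫⁻ y in Ioi a, F (y, t) :=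
        lintegral_lintegral_swap hF.aemeasurable
    _ = ∫⁻ t in Ioi a, (∫⁻ y in Ioi t, w y) * g t := by
        refine setLIntegral_congr_fun measurableSet_Ioi fun t ht => ?_
        have : (fun y => F (y, t)) = (Ioi t).indicator fun y => w y * g t := by
          ext y; simp [F, indicator_apply]
        rw [this, lintegral_indicator measurableSet_Ioi,
          Measure.restrict_restrict measurableSet_Ioi, Ioi_inter_Ioi, max_eq_left (le_of_lt ht), lintegral_mul_const _ hw]

theorem lintegral_Ioo_rpow_sub_one {δ y : ℝ} (hδ : 0 < δ) (hy : 0 < y) :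
    ∫⁻ t in Ioo 0 y, ENNReal.ofReal (t ^ (δ - 1)) = ENNReal.ofReal (y ^ δ / δ) := by
  have hint : IntegrableOn (fun t : ℝ => t ^ (δ - 1)) (Ioo 0 y) := by
    rw [← intervalIntegrable_iff_integrableOn_Ioo_of_le hy.le]
    exact intervalIntegral.intervalIntegrable_rpow' (by linarith)
  rw [← ofReal_integral_eq_lintegral_ofReal hint
      ((ae_restrict_iff' measurableSet_Ioo).2 (.of_forall fun t ht => Real.rpow_nonneg ht.1.le _)),
    ← integral_Ioc_eq_integral_Ioo, ← intervalIntegral.integral_of_le hy.le,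
    integral_rpow (Or.inl (by linarith)), sub_add_cancel, Real.zero_rpow hδ.ne', sub_zero]

theorem lintegral_Ioi_rpow_neg_one_sub {δ t : ℝ} (hδ : 0 < δ) (ht : 0 < t) :
    ∫⁻ y in Ioi t, ENNReal.ofReal (y ^ (-1 - δ)) = ENNReal.ofReal (t ^ (-δ) / δ) := by
  rw [← ofReal_integral_eq_lintegral_ofReal (integrableOn_Ioi_rpow_of_lt (by linarith) ht)
      ((ae_restrict_iff' measurableSet_Ioi).2
        (.of_forall fun y hy => Real.rpow_nonneg (ht.trans hy).le _)),
    integral_Ioi_rpow_of_lt (by linarith) ht, (by ring : -1 - δ + 1 = -δ), neg_div_neg_eq]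

theorem rpow_average_mul_rpow_le {p α δ y : ℝ} (hp : 1 < p) (hδ : 0 < δ)
    (hδp : δ * p = p - α - 1) (hy : 0 < y) {f : ℝ → ℝ≥0∞} (hf : Measurable f) :
    (ENNReal.ofReal (1 / y) * ∫⁻ t in Ioo 0 y, f t) ^ p * ENNReal.ofReal (y ^ α)
      ≤ ENNReal.ofReal (δ ^ (1 - p)) *
        (ENNReal.ofReal (y ^ (-1 - δ)) *
          ∫⁻ t in Ioo 0 y, f t ^ p * ENNReal.ofReal (t ^ (α + δ))) := by
  have hp0 : 0 < p := by linarith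
  have hweight : ∫⁻ t in Ioo 0 y, ENNReal.ofReal (t ^ (α + δ)) ^ (-(p - 1)⁻¹)
      = ENNReal.ofReal (y ^ δ / δ) := by
    rw [← lintegral_Ioo_rpow_sub_one hδ hy]
    refine setLIntegral_congr_fun measurableSet_Ioo fun t ht => ?_
    rw [ENNReal.ofReal_rpow_of_pos (Real.rpow_pos_of_pos ht.1 _), ← Real.rpow_mul ht.1.le]
    congr 2
    field_simp [sub_ne_zero.2 hp.ne']
    linear_combination -hδp
  have holder := lintegral_rpow_le_mul_lintegral_weight (volume.restrict (Ioo 0 y)) hp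
    hf.aemeasurable
    (by fun_prop : Measurable fun t : ℝ => ENNReal.ofReal (t ^ (α + δ))).aemeasurable
    ((ae_restrict_iff' measurableSet_Ioo).2 (.of_forall fun t ht =>
      ENNReal.ofReal_pos.2 (Real.rpow_pos_of_pos ht.1 _) |>.ne'))
    (.of_forall fun _ => ENNReal.ofReal_ne_top)
  rw [hweight] at holder
  have hpow : (1 / y) ^ p * y ^ α * (y ^ δ / δ) ^ (p - 1) = δ ^ (1 - p) * y ^ (-1 - δ) := by
    rw [one_div, Real.inv_rpow hy.le, ← Real.rpow_neg hy.le,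
      Real.div_rpow (Real.rpow_nonneg hy.le _) hδ.le, ← Real.rpow_mul hy.le,
      div_eq_mul_inv, ← Real.rpow_neg hδ.le, neg_sub,
      show -1 - δ = -p + α + δ * (p - 1) by linear_combination -hδp,
      Real.rpow_add hy, Real.rpow_add hy]
    ring
  calc (ENNReal.ofReal (1 / y) * ∫⁻ t in Ioo 0 y, f t) ^ p * ENNReal.ofReal (y ^ α)
      = ENNReal.ofReal (1 / y) ^ p * ENNReal.ofReal (y ^ α) * (∫⁻ t in Ioo 0 y, f t) ^ p := by
        rw [ENNReal.mul_rpow_of_nonneg _ _ hp0.le]; ring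
    _ ≤ ENNReal.ofReal (1 / y) ^ p * ENNReal.ofReal (y ^ α) * (ENNReal.ofReal (y ^ δ / δ) ^ (p - 1)
          * ∫⁻ t in Ioo 0 y, f t ^ p * ENNReal.ofReal (t ^ (α + δ))) := by gcongr
    _ = ENNReal.ofReal ((1 / y) ^ p * y ^ α * (y ^ δ / δ) ^ (p - 1))
          * ∫⁻ t in Ioo 0 y, f t ^ p * ENNReal.ofReal (t ^ (α + δ)) := by
        rw [ENNReal.ofReal_mul (by positivity), ENNReal.ofReal_mul (by positivity),
          ENNReal.ofReal_rpow_of_pos (by positivity), ENNReal.ofReal_rpow_of_pos (by positivity)]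
        ring
    _ = _ := by
      rw [hpow, ENNReal.ofReal_mul (by positivity), mul_assoc]

/-- Classical Hardy inequality on the half-line for averages of the initial integral,
with power weight `y ^ α`, `α < p - 1`. Both sides may be infinite. -/
theorem hardy_initial_inequality (p α : ℝ) (hp : 1 < p) (hα : α < p - 1)
    (f : ℝ → ENNReal) (hf : Measurable f) :
    ∫⁻ y in Ioi (0 : ℝ),
        (ENNReal.ofReal (1 / y) * ∫⁻ t in Ioo (0 : ℝ) y, f t) ^ p * ENNReal.ofReal (y ^ α)
      ≤ ENNReal.ofReal ((p / (p - α - 1)) ^ p) *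
        ∫⁻ y in Ioi (0 : ℝ), (f y) ^ p * ENNReal.ofReal (y ^ α) := by
  set δ := (p - α - 1) / p with hδ_def
  have hδ : 0 < δ := div_pos (by linarith) (by linarith)
  have hδp : δ * p = p - α - 1 := div_mul_cancel₀ _ (by linarith)
  have hcancel : ∀ t > 0, t ^ (-δ) / δ * t ^ (α + δ) = 1 / δ * t ^ α := fun t ht => by
    rw [div_mul_eq_mul_div, ← Real.rpow_add ht, show -δ + (α + δ) = α by ring]; ring
  have hconst : δ ^ (1 - p) * (1 / δ) = (p / (p - α - 1)) ^ p := by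
    rw [one_div, ← Real.rpow_neg_one, ← Real.rpow_add hδ, show 1 - p + -1 = -p by ring,
      Real.rpow_neg hδ.le, ← Real.inv_rpow hδ.le, hδ_def, inv_div]
  calc _ ≤ ∫⁻ y in Ioi 0, ENNReal.ofReal (δ ^ (1 - p)) * (ENNReal.ofReal (y ^ (-1 - δ)) *
          ∫⁻ t in Ioo 0 y, f t ^ p * ENNReal.ofReal (t ^ (α + δ))) :=
        setLIntegral_mono' measurableSet_Ioi fun y hy => rpow_average_mul_rpow_le hp hδ hδp hy hf
    _ = ENNReal.ofReal (δ ^ (1 - p)) *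
          ∫⁻ t in Ioi 0,
            ENNReal.ofReal (t ^ (-δ) / δ) * (f t ^ p * ENNReal.ofReal (t ^ (α + δ))) := by
        rw [lintegral_const_mul' _ _ ENNReal.ofReal_ne_top,
          lintegral_Ioi_mul_lintegral_Ioo (by fun_prop) (by fun_prop)]
        congr 1
        exact setLIntegral_congr_fun measurableSet_Ioi fun t ht => by
          rw [lintegral_Ioi_rpow_neg_one_sub hδ ht]
    _ = ENNReal.ofReal (δ ^ (1 - p)) *
          ∫⁻ t in Ioi 0, ENNReal.ofReal (1 / δ) * (f t ^ p * ENNReal.ofReal (t ^ α)) := by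
        congr 1
        refine setLIntegral_congr_fun measurableSet_Ioi fun t (ht : 0 < t) => ?_
        rw [mul_left_comm, ← ENNReal.ofReal_mul (by positivity), hcancel t ht,
          ENNReal.ofReal_mul (by positivity), mul_left_comm]
    _ = _ := by
      rw [lintegral_const_mul' _ _ ENNReal.ofReal_ne_top, ← mul_assoc,
        ← ENNReal.ofReal_mul (by positivity), hconst]
end

section
/- Fix σ with 0 ≤ σ < 1/2 and let e_σ : [0,∞) → ℝ satisfy ‖e_σ‖_{L^∞} + ‖z e_σ'‖_{L^∞} ≤ 2σ. For r > 0 define, on X = H¹₀(0,r) × H¹₀(0,r), the bilinear form B[(φ,ψ),(φ₁,ψ₁)] = ∫₀^r [φ'φ₁' − (z/2)φ'φ₁ + (z/2)e_σ ψ'φ₁] + ∫₀^r [ψ'ψ₁' − (z/2)ψ'ψ₁ + (z/2)e_σ φ'ψ₁]. Then B is coercive: there exists a constant c > 0, depending only on σ, such that B[(φ,ψ),(φ,ψ)] ≥ c (‖φ‖²_{H¹} + ‖ψ‖²_{H¹}) for all (φ,ψ) ∈ X, provided σ is sufficiently small. -/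
open Set intervalIntegral

/-!
Both first-order terms are exact derivatives up to a zeroth-order remainder:
`-(z/2) φ' φ = -(d/dz)(z φ²/4) + φ²/4` and `(z/2) e_σ (φ' ψ + φ ψ') = (d/dz)((z/2) e_σ φ ψ) - u φ ψ`
with `u = (z e_σ)'/2`, so `|u| ≤ σ`. Subtracting the derivative of the flux
`(z/2) e_σ φ ψ - (z/4)(φ² + ψ²)`, which vanishes at `0` (because of the weight `z`) and at `r`,
leaves the pointwise bound
`φ'² + ψ'² + (φ² + ψ²)/4 - u φ ψ ≥ (1/4 - σ/2)(φ² + φ'² + ψ² + ψ'²)`.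
-/

theorem continuous_of_forall_hasDerivAt {𝕜 F : Type*} [NontriviallyNormedField 𝕜]
    [NormedAddCommGroup F] [NormedSpace 𝕜 F] {f f' : 𝕜 → F} (hf : ∀ x, HasDerivAt f (f' x) x) :
    Continuous f :=
  continuous_iff_continuousAt.2 fun x => (hf x).continuousAt

theorem mul_mul_le_of_abs_le {w σ a b : ℝ} (hw : |w| ≤ σ) :
    w * (a * b) ≤ σ / 2 * (a ^ 2 + b ^ 2) := by
  have hab : 2 * |a * b| ≤ a ^ 2 + b ^ 2 := by
    simpa only [abs_mul, sq_abs, mul_assoc] using two_mul_le_add_sq |a| |b|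
  have hσ : 0 ≤ σ := (abs_nonneg w).trans hw
  calc w * (a * b) ≤ |w| * |a * b| := (le_abs_self _).trans_eq (abs_mul _ _)
    _ ≤ σ * |a * b| := by gcongr
    _ ≤ σ / 2 * (a ^ 2 + b ^ 2) := by nlinarith

theorem abs_half_add_half_mul_le {σ z e e' : ℝ} (h : |e| + |z * e'| ≤ 2 * σ) :
    |e / 2 + z / 2 * e'| ≤ σ :=
  calc |e / 2 + z / 2 * e'| = |(e + z * e') / 2| := by congr 1; ring
    _ ≤ (|e| + |z * e'|) / 2 := by rw [abs_div, abs_two]; gcongr; exact abs_add_le _ _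
    _ ≤ σ := by linarith

noncomputable def selfSimilarFlux (eσ φ ψ : ℝ → ℝ) (z : ℝ) : ℝ :=
  z / 2 * eσ z * (φ z * ψ z) - z / 4 * (φ z ^ 2 + ψ z ^ 2)

theorem hasDerivAt_selfSimilarFlux {eσ eσ' φ φ' ψ ψ' : ℝ → ℝ} {z : ℝ}
    (heσ : HasDerivAt eσ (eσ' z) z) (hφ : HasDerivAt φ (φ' z) z) (hψ : HasDerivAt ψ (ψ' z) z) :
    HasDerivAt (selfSimilarFlux eσ φ ψ)
      ((eσ z / 2 + z / 2 * eσ' z) * (φ z * ψ z) + z / 2 * eσ z * (φ' z * ψ z + φ z * ψ' z)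
        - (φ z ^ 2 + ψ z ^ 2) / 4 - z / 2 * (φ z * φ' z + ψ z * ψ' z)) z := by
  have hz2 : HasDerivAt (fun z : ℝ => z / 2) (1 / 2) z := (hasDerivAt_id z).div_const 2
  have hz4 : HasDerivAt (fun z : ℝ => z / 4) (1 / 4) z := (hasDerivAt_id z).div_const 4
  refine (((hz2.mul heσ).mul (hφ.mul hψ)).sub
    (hz4.mul ((hφ.pow 2).add (hψ.pow 2)))).congr_deriv ?_
  norm_num
  ring

theorem selfSimilarFlux_deriv_le {σ z e e' a a' b b' : ℝ} (h : |e| + |z * e'| ≤ 2 * σ) :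
    (e / 2 + z / 2 * e') * (a * b) + z / 2 * e * (a' * b + a * b')
        - (a ^ 2 + b ^ 2) / 4 - z / 2 * (a * a' + b * b') ≤
      (a' ^ 2 - z / 2 * a' * a + z / 2 * e * b' * a) + (b' ^ 2 - z / 2 * b' * b + z / 2 * e * a' * b)
        - (1 / 4 - σ / 2) * (a ^ 2 + a' ^ 2 + b ^ 2 + b' ^ 2) := by
  have hu := abs_half_add_half_mul_le h
  have hσ : 0 ≤ σ := (abs_nonneg _).trans hu
  nlinarith [mul_mul_le_of_abs_le (a := a) (b := b) hu, sq_nonneg a', sq_nonneg b']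

/-- Coercivity of the linearized self-similar bilinear form: for `σ` sufficiently small
there is `c = c(σ) > 0` such that for every `r > 0`, every `e_σ` with
`|e_σ(z)| + |z e_σ'(z)| ≤ 2σ` on `[0,r]`, and every pair `(φ,ψ)` vanishing at `0` and `r`,
`B[(φ,ψ),(φ,ψ)] ≥ c (‖φ‖²_{H¹} + ‖ψ‖²_{H¹})`. -/
theorem bilinear_form_coercive :
    ∃ σ₀ : ℝ, 0 < σ₀ ∧ ∀ σ : ℝ, 0 ≤ σ → σ < σ₀ →
      ∃ c : ℝ, 0 < c ∧ ∀ r : ℝ, 0 < r →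
        ∀ eσ eσ' : ℝ → ℝ,
          (∀ z : ℝ, HasDerivAt eσ (eσ' z) z) →
          (∀ z ∈ Icc (0 : ℝ) r, |eσ z| + |z * eσ' z| ≤ 2 * σ) →
          ∀ φ φ' ψ ψ' : ℝ → ℝ,
            (∀ z : ℝ, HasDerivAt φ (φ' z) z) → Continuous φ' →
            (∀ z : ℝ, HasDerivAt ψ (ψ' z) z) → Continuous ψ' →
            φ 0 = 0 → φ r = 0 → ψ 0 = 0 → ψ r = 0 →
            c * ∫ z in (0 : ℝ)..r, (φ z ^ 2 + φ' z ^ 2 + ψ z ^ 2 + ψ' z ^ 2) ≤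
              (∫ z in (0 : ℝ)..r,
                (φ' z ^ 2 - z / 2 * φ' z * φ z + z / 2 * eσ z * ψ' z * φ z)) +
              ∫ z in (0 : ℝ)..r,
                (ψ' z ^ 2 - z / 2 * ψ' z * ψ z + z / 2 * eσ z * φ' z * ψ z) := by
  refine ⟨1 / 4, by norm_num, fun σ _ hσ => ⟨1 / 4 - σ / 2, by linarith, ?_⟩⟩
  intro r hr eσ eσ' heσ hbd φ φ' ψ ψ' hφ hφ' hψ hψ' _ hφr _ hψr
  have heσc : Continuous eσ := continuous_of_forall_hasDerivAt heσ
  have hφc : Continuous φ := continuous_of_forall_hasDerivAt hφ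
  have hψc : Continuous ψ := continuous_of_forall_hasDerivAt hψ
  have hF := fun z => hasDerivAt_selfSimilarFlux (heσ z) (hφ z) (hψ z)
  have key : selfSimilarFlux eσ φ ψ r - selfSimilarFlux eσ φ ψ 0 ≤
      (∫ z in (0 : ℝ)..r, (φ' z ^ 2 - z / 2 * φ' z * φ z + z / 2 * eσ z * ψ' z * φ z)) +
        (∫ z in (0 : ℝ)..r, (ψ' z ^ 2 - z / 2 * ψ' z * ψ z + z / 2 * eσ z * φ' z * ψ z)) -
        (1 / 4 - σ / 2) * ∫ z in (0 : ℝ)..r, (φ z ^ 2 + φ' z ^ 2 + ψ z ^ 2 + ψ' z ^ 2) := by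
    rw [← integral_const_mul, ← integral_add, ← integral_sub]
    · exact sub_le_integral_of_hasDeriv_right_of_le hr.le
        (continuous_of_forall_hasDerivAt hF).continuousOn
        (fun z _ => (hF z).hasDerivWithinAt) (by fun_prop : Continuous _).integrableOn_Icc
        (fun z hz => selfSimilarFlux_deriv_le (hbd z (Ioo_subset_Icc_self hz)))
    all_goals exact Continuous.intervalIntegrable (by fun_prop) _ _
  simp only [selfSimilarFlux, hφr, hψr] at key
  linarith
end

section
/- Let v : [0,∞) → ℝ be absolutely continuous with v(0) = 0, and let 0 < κ < 1/2. Suppose y^{1/2−κ} v'(y) and y^{1/2+κ} v'(y) are in L²(0,∞). Then v ∈ L^∞(0,∞) and ‖v‖²_{L^∞} ≤ C(κ) ‖ y^{1/2−κ} v' ‖_{L²(0,∞)} ‖ y^{1/2+κ} v' ‖_{L²(0,∞)}. -/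
/-!
Since `v 0 = 0`, `|v y| ≤ ∫₀^∞ |v'|`. Split `(0, ∞)` at `T > 0` and apply Cauchy–Schwarz with
the weight `t ^ (1/2 - κ)` on `(0, T]` and `t ^ (1/2 + κ)` on `(T, ∞)`: the reciprocal weights are
square integrable there, which gives `κ (∫₀^∞ |v'|)² ≤ T^(2κ) A + T^(-2κ) B` with `A`, `B` the
squared weighted `L²` norms of `v'`. Minimising over `T` turns the right-hand side into `2 √A √B`.
-/

open MeasureTheory Set

section CauchySchwarz

variable {α : Type*} [MeasurableSpace α] {μ : Measure α} {f g : α → ℝ}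

theorem integral_mul_le_sqrt_mul_sqrt_of_nonneg (hf0 : 0 ≤ᵐ[μ] f) (hg0 : 0 ≤ᵐ[μ] g)
    (hf : MemLp f 2 μ) (hg : MemLp g 2 μ) :
    ∫ t, f t * g t ∂μ ≤ √(∫ t, f t ^ 2 ∂μ) * √(∫ t, g t ^ 2 ∂μ) := by
  have h := integral_mul_le_Lp_mul_Lq_of_nonneg Real.HolderConjugate.two_two hf0 hg0
    (by simpa using hf) (by simpa using hg)
  simpa only [Real.rpow_two, ← Real.sqrt_eq_rpow] using h

theorem integrable_of_memLp_inv_mul (hg0 : ∀ᵐ t ∂μ, g t ≠ 0)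
    (hg : MemLp (fun t => (g t)⁻¹) 2 μ) (hgf : MemLp (fun t => g t * f t) 2 μ) :
    Integrable f μ :=
  (hg.integrable_mul hgf).congr <| by
    filter_upwards [hg0] with t ht
    simp [inv_mul_cancel_left₀ ht]

theorem integral_abs_le_of_memLp_inv_mul (hg0 : ∀ᵐ t ∂μ, g t ≠ 0)
    (hg : MemLp (fun t => (g t)⁻¹) 2 μ) (hgf : MemLp (fun t => g t * f t) 2 μ) :
    ∫ t, |f t| ∂μ ≤ √(∫ t, (g t)⁻¹ ^ 2 ∂μ) * √(∫ t, (g t * f t) ^ 2 ∂μ) := by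
  have hsplit : (fun t => |f t|) =ᵐ[μ] fun t => |(g t)⁻¹| * |g t * f t| := by
    filter_upwards [hg0] with t ht
    rw [← abs_mul, inv_mul_cancel_left₀ ht]
  rw [integral_congr_ae hsplit]
  simpa only [sq_abs] using integral_mul_le_sqrt_mul_sqrt_of_nonneg
    (.of_forall fun _ => abs_nonneg _) (.of_forall fun _ => abs_nonneg _) hg.abs hgf.abs

end CauchySchwarz

theorem sq_inv_rpow {t : ℝ} (ht : 0 ≤ t) (a : ℝ) : (t ^ a)⁻¹ ^ 2 = t ^ (-2 * a) := by
  rw [← Real.rpow_neg ht, ← Real.rpow_mul_natCast ht]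
  ring_nf

theorem memLp_two_inv_rpow {s : Set ℝ} (hs : MeasurableSet s) (hs0 : s ⊆ Ioi 0) {a : ℝ}
    (h : IntegrableOn (fun t => t ^ (-2 * a)) s) :
    MemLp (fun t : ℝ => (t ^ a)⁻¹) 2 (volume.restrict s) := by
  rw [memLp_two_iff_integrable_sq
    (by fun_prop : Measurable fun t : ℝ => (t ^ a)⁻¹).aestronglyMeasurable]
  exact h.congr_fun (fun t ht => (sq_inv_rpow (hs0 ht).le a).symm) hs

theorem memLp_two_inv_rpow_Ioc {a : ℝ} (ha : a < 1 / 2) (T : ℝ) :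
    MemLp (fun t : ℝ => (t ^ a)⁻¹) 2 (volume.restrict (Ioc 0 T)) :=
  memLp_two_inv_rpow measurableSet_Ioc Ioc_subset_Ioi_self
    (intervalIntegral.intervalIntegrable_rpow' (by linarith)).1

theorem memLp_two_inv_rpow_Ioi {a T : ℝ} (ha : 1 / 2 < a) (hT : 0 < T) :
    MemLp (fun t : ℝ => (t ^ a)⁻¹) 2 (volume.restrict (Ioi T)) :=
  memLp_two_inv_rpow measurableSet_Ioi (Ioi_subset_Ioi hT.le)
    (integrableOn_Ioi_rpow_of_lt (by linarith) hT)

theorem integral_Ioc_sq_inv_rpow {a T : ℝ} (ha : a < 1 / 2) (hT : 0 < T) :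
    ∫ t in Ioc 0 T, (t ^ a)⁻¹ ^ 2 = T ^ (1 - 2 * a) / (1 - 2 * a) := by
  rw [setIntegral_congr_fun measurableSet_Ioc fun t ht => sq_inv_rpow ht.1.le a,
    ← intervalIntegral.integral_of_le hT.le, integral_rpow (.inl (by linarith)),
    Real.zero_rpow (by linarith)]
  ring_nf

theorem integral_Ioi_sq_inv_rpow {a T : ℝ} (ha : 1 / 2 < a) (hT : 0 < T) :
    ∫ t in Ioi T, (t ^ a)⁻¹ ^ 2 = T ^ (1 - 2 * a) / (2 * a - 1) := by
  rw [setIntegral_congr_fun measurableSet_Ioi fun t ht => sq_inv_rpow (hT.trans ht).le a,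
    integral_Ioi_rpow_of_lt (by linarith) hT, ← neg_div_neg_eq]
  ring_nf

theorem integrableOn_and_integral_abs_le_of_memLp_rpow_mul {s : Set ℝ} (hs : MeasurableSet s)
    (hs0 : s ⊆ Ioi 0) {a : ℝ} {f : ℝ → ℝ}
    (hw : MemLp (fun t : ℝ => (t ^ a)⁻¹) 2 (volume.restrict s))
    (hf : MemLp (fun t => t ^ a * f t) 2 (volume.restrict (Ioi 0))) :
    IntegrableOn f s ∧
      ∫ t in s, |f t| ≤ √(∫ t in s, (t ^ a)⁻¹ ^ 2) * √(∫ t in Ioi 0, (t ^ a * f t) ^ 2) := by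
  have hg0 : ∀ᵐ t ∂volume.restrict s, t ^ a ≠ 0 :=
    ae_restrict_of_forall_mem hs fun t ht => (Real.rpow_pos_of_pos (hs0 ht) a).ne'
  have hfs := hf.mono_measure (Measure.restrict_mono hs0 le_rfl)
  refine ⟨integrable_of_memLp_inv_mul hg0 hw hfs,
    (integral_abs_le_of_memLp_inv_mul hg0 hw hfs).trans ?_⟩
  refine mul_le_mul_of_nonneg_left (Real.sqrt_le_sqrt ?_) (Real.sqrt_nonneg _)
  exact setIntegral_mono_set hf.integrable_sq (.of_forall fun _ => sq_nonneg _) hs0.eventuallyLE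

theorem integrableOn_Ioi_and_sq_integral_abs_le {a b T : ℝ} (ha : a < 1 / 2) (hb : 1 / 2 < b)
    (hT : 0 < T) {f : ℝ → ℝ} (hfa : MemLp (fun t => t ^ a * f t) 2 (volume.restrict (Ioi 0)))
    (hfb : MemLp (fun t => t ^ b * f t) 2 (volume.restrict (Ioi 0))) :
    IntegrableOn f (Ioi 0) ∧ (∫ t in Ioi 0, |f t|) ^ 2 ≤
      2 * (T ^ (1 - 2 * a) / (1 - 2 * a) * (∫ t in Ioi 0, (t ^ a * f t) ^ 2) +
        T ^ (1 - 2 * b) / (2 * b - 1) * ∫ t in Ioi 0, (t ^ b * f t) ^ 2) := by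
  obtain ⟨hi₁, h₁⟩ := integrableOn_and_integral_abs_le_of_memLp_rpow_mul measurableSet_Ioc
    Ioc_subset_Ioi_self (memLp_two_inv_rpow_Ioc ha T) hfa
  obtain ⟨hi₂, h₂⟩ := integrableOn_and_integral_abs_le_of_memLp_rpow_mul measurableSet_Ioi
    (Ioi_subset_Ioi hT.le) (memLp_two_inv_rpow_Ioi hb hT) hfb
  rw [integral_Ioc_sq_inv_rpow ha hT] at h₁
  rw [integral_Ioi_sq_inv_rpow hb hT] at h₂
  have hsplit : ∫ t in Ioi 0, |f t| = (∫ t in Ioc 0 T, |f t|) + ∫ t in Ioi T, |f t| := by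
    rw [← setIntegral_union (Ioc_disjoint_Ioi le_rfl) measurableSet_Ioi hi₁.abs hi₂.abs,
      Ioc_union_Ioi_eq_Ioi hT.le]
  refine ⟨Ioc_union_Ioi_eq_Ioi hT.le ▸ hi₁.union hi₂, hsplit ▸ ?_⟩
  calc _ ≤ (√(T ^ (1 - 2 * a) / (1 - 2 * a)) * √(∫ t in Ioi 0, (t ^ a * f t) ^ 2) +
        √(T ^ (1 - 2 * b) / (2 * b - 1)) * √(∫ t in Ioi 0, (t ^ b * f t) ^ 2)) ^ 2 := by
        gcongr
    _ ≤ _ := by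
      refine add_sq_le.trans_eq ?_
      rw [mul_pow, mul_pow, Real.sq_sqrt, Real.sq_sqrt, Real.sq_sqrt, Real.sq_sqrt]
      all_goals first
        | exact integral_nonneg fun _ => sq_nonneg _
        | exact div_nonneg (by positivity) (by linarith)

theorem abs_sub_le_integral_Ioi_abs {v v' : ℝ → ℝ} {a b : ℝ} (hab : a ≤ b)
    (hv : ∀ t ∈ Icc a b, HasDerivAt v (v' t) t) (hint : IntegrableOn v' (Ioi a)) :
    |v b - v a| ≤ ∫ t in Ioi a, |v' t| := by
  rw [← intervalIntegral.integral_eq_sub_of_hasDerivAt (by rwa [uIcc_of_le hab])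
    ((intervalIntegrable_iff_integrableOn_Ioc_of_le hab).2 (hint.mono_set Ioc_subset_Ioi_self))]
  calc _ ≤ ∫ t in a..b, |v' t| := intervalIntegral.abs_integral_le_integral_abs hab
    _ = ∫ t in Ioc a b, |v' t| := intervalIntegral.integral_of_le hab
    _ ≤ _ := setIntegral_mono_set hint.abs (.of_forall fun _ => abs_nonneg _)
        Ioc_subset_Ioi_self.eventuallyLE

theorem le_two_mul_sqrt_mul_sqrt_of_forall_le {x a b : ℝ} (ha : 0 ≤ a) (hb : 0 ≤ b)
    (h : ∀ s > 0, x ≤ s * a + b / s) : x ≤ 2 * √a * √b := by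
  rcases ha.eq_or_lt with rfl | ha
  · refine le_of_forall_pos_le_add fun ε hε => ?_
    calc x ≤ b / ((b + 1) / ε) := by simpa using h ((b + 1) / ε) (by positivity)
      _ = ε * (b / (b + 1)) := by field_simp
      _ ≤ 2 * √0 * √b + ε := by
        rw [Real.sqrt_zero, mul_zero, zero_mul, zero_add]
        exact mul_le_of_le_one_right hε.le ((div_le_one₀ (by positivity)).2 (by linarith))
  rcases hb.eq_or_lt with rfl | hb
  · refine le_of_forall_pos_le_add fun ε hε => ?_
    calc x ≤ ε / (a + 1) * a := by simpa using h (ε / (a + 1)) (by positivity)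
      _ = ε * (a / (a + 1)) := by ring
      _ ≤ 2 * √a * √0 + ε := by
        rw [Real.sqrt_zero, mul_zero, zero_add]
        exact mul_le_of_le_one_right hε.le ((div_le_one₀ (by positivity)).2 (by linarith))
  obtain ⟨p, hp, rfl⟩ : ∃ p, 0 < p ∧ a = p ^ 2 :=
    ⟨√a, Real.sqrt_pos.2 ha, (Real.sq_sqrt ha.le).symm⟩
  obtain ⟨q, hq, rfl⟩ : ∃ q, 0 < q ∧ b = q ^ 2 :=
    ⟨√b, Real.sqrt_pos.2 hb, (Real.sq_sqrt hb.le).symm⟩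
  rw [Real.sqrt_sq hp.le, Real.sqrt_sq hq.le]
  calc x ≤ q / p * p ^ 2 + q ^ 2 / (q / p) := h _ (by positivity)
    _ = 2 * p * q := by field_simp; ring

theorem final_layer_sup_bound_general (κ : ℝ) (hκ0 : 0 < κ) :
    ∃ C : ℝ, 0 < C ∧ ∀ v v' : ℝ → ℝ,
      (∀ y : ℝ, HasDerivAt v (v' y) y) → v 0 = 0 →
      MemLp (fun y => y ^ ((1 : ℝ) / 2 - κ) * v' y) 2 (volume.restrict (Ioi (0 : ℝ))) →
      MemLp (fun y => y ^ ((1 : ℝ) / 2 + κ) * v' y) 2 (volume.restrict (Ioi (0 : ℝ))) →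
      ∀ y : ℝ, 0 ≤ y →
        (v y) ^ 2 ≤ C * Real.sqrt (∫ t in Ioi (0 : ℝ), (t ^ ((1 : ℝ) / 2 - κ) * v' t) ^ 2) *
          Real.sqrt (∫ t in Ioi (0 : ℝ), (t ^ ((1 : ℝ) / 2 + κ) * v' t) ^ 2) := by
  refine ⟨2 / κ, by positivity, fun v v' hv hv0 hA hB y hy => ?_⟩
  have hbound := fun T (hT : 0 < T) =>
    integrableOn_Ioi_and_sq_integral_abs_le (by linarith) (by linarith) hT hA hB
  set A := ∫ t in Ioi (0 : ℝ), (t ^ ((1 : ℝ) / 2 - κ) * v' t) ^ 2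
  set B := ∫ t in Ioi (0 : ℝ), (t ^ ((1 : ℝ) / 2 + κ) * v' t) ^ 2
  have hvy : |v y| ≤ ∫ t in Ioi 0, |v' t| := by
    simpa [hv0] using abs_sub_le_integral_Ioi_abs hy (fun t _ => hv t) (hbound 1 one_pos).1
  have hscale : ∀ s > 0, κ * (∫ t in Ioi 0, |v' t|) ^ 2 ≤ s * A + B / s := by
    intro s hs
    have h := (hbound (s ^ (2 * κ)⁻¹) (by positivity)).2
    rw [← Real.rpow_mul hs.le, ← Real.rpow_mul hs.le,
      show (2 * κ)⁻¹ * (1 - 2 * (1 / 2 - κ)) = 1 by field_simp; ring,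
      show (2 * κ)⁻¹ * (1 - 2 * (1 / 2 + κ)) = -1 by field_simp; ring,
      Real.rpow_one, Real.rpow_neg_one, show 1 - 2 * (1 / 2 - κ) = 2 * κ by ring,
      show 2 * (1 / 2 + κ) - 1 = 2 * κ by ring] at h
    calc _ ≤ κ * _ := mul_le_mul_of_nonneg_left h hκ0.le
      _ = _ := by field_simp
  have hAB := le_two_mul_sqrt_mul_sqrt_of_forall_le (integral_nonneg fun _ => sq_nonneg _)
    (integral_nonneg fun _ => sq_nonneg _) hscale
  calc v y ^ 2 = |v y| ^ 2 := (sq_abs _).symm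
    _ ≤ (∫ t in Ioi 0, |v' t|) ^ 2 := by gcongr
    _ ≤ 2 / κ * √A * √B := by
      rw [mul_assoc, div_mul_eq_mul_div, le_div_iff₀ hκ0]
      linarith

/-- Sup bound for the final boundary layer vertical component vanishing at `y = 0`:
for `0 < κ < 1/2` there is `C = C(κ)` such that
`‖v‖²_{L^∞} ≤ C ‖y^(1/2−κ) v'‖_{L²} ‖y^(1/2+κ) v'‖_{L²}`. -/
theorem final_layer_sup_bound (κ : ℝ) (hκ0 : 0 < κ) (hκ : κ < 1 / 2) :
    ∃ C : ℝ, 0 < C ∧ ∀ v v' : ℝ → ℝ,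
      (∀ y : ℝ, HasDerivAt v (v' y) y) → v 0 = 0 →
      MemLp (fun y => y ^ ((1 : ℝ) / 2 - κ) * v' y) 2 (volume.restrict (Ioi (0 : ℝ))) →
      MemLp (fun y => y ^ ((1 : ℝ) / 2 + κ) * v' y) 2 (volume.restrict (Ioi (0 : ℝ))) →
      ∀ y : ℝ, 0 ≤ y →
        (v y) ^ 2 ≤ C * Real.sqrt (∫ t in Ioi (0 : ℝ), (t ^ ((1 : ℝ) / 2 - κ) * v' t) ^ 2) *
          Real.sqrt (∫ t in Ioi (0 : ℝ), (t ^ ((1 : ℝ) / 2 + κ) * v' t) ^ 2) :=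
  final_layer_sup_bound_general κ hκ0
end
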